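/- arXiv:2106.04929 — 6 statements merged into one kernel-verified Lean document; each statement's English description precedes it below -/
import Mathlib

section
/- Let A be a finite active index set with design matrix X_A ∈ ℝ^{n×|A|} such that X_Aᵀ X_A is invertible, let X_{A^c} ∈ ℝ^{n×m} be the matrix of inactive features, q, b ∈ ℝⁿ, λ ∈ ℝ. Suppose β, β′ ∈ ℝ^{|A|}, subgradient vectors s^c, s′^c ∈ ℝ^m, and τ, τ′ ∈ ℝ satisfy: X_Aᵀ(X_A β − (q + τ b)) + λ s_A = 0 and X_Aᵀ(X_A β′ − (q + τ′ b)) + λ s_A = 0 for a common sign vector s_A, together with −X_{A^c}ᵀ((q + τ b) − X_A β) + λ s^c = 0 and −X_{A^c}ᵀ((q + τ′ b) − X_A β′) + λ s′^c = 0. Then λ s′^c − λ s^c = γ_{A^c} · (τ′ − τ), where γ_{A^c} = X_{A^c}ᵀ b − X_{A^c}ᵀ X_A (X_Aᵀ X_A)⁻¹ X_Aᵀ b; in particular λ s_{A^c}(τ) is piecewise linear in τ. -/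
open Matrix

/-- In the LASSO τ-path, the scaled subgradient λ s of the inactive features is
piecewise linear in τ with slope γ_{A^c} = X_{A^c}ᵀ b − X_{A^c}ᵀ X_A (X_Aᵀ X_A)⁻¹ X_Aᵀ b. -/
theorem lasso_tau_path_subgradient_piecewise_linear
    (n a m : ℕ) (X : Matrix (Fin n) (Fin a) ℝ) (hinv : IsUnit (Xᵀ * X))
    (Xc : Matrix (Fin n) (Fin m) ℝ)
    (q b : Fin n → ℝ) (lam : ℝ) (sA : Fin a → ℝ)
    (β β' : Fin a → ℝ) (sc sc' : Fin m → ℝ) (τ τ' : ℝ)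
    (hA : Xᵀ.mulVec (X.mulVec β - (q + τ • b)) + lam • sA = 0)
    (hA' : Xᵀ.mulVec (X.mulVec β' - (q + τ' • b)) + lam • sA = 0)
    (hC : -(Xcᵀ.mulVec ((q + τ • b) - X.mulVec β)) + lam • sc = 0)
    (hC' : -(Xcᵀ.mulVec ((q + τ' • b) - X.mulVec β')) + lam • sc' = 0) :
    lam • sc' - lam • sc =
      (τ' - τ) •
        (Xcᵀ.mulVec b - Xcᵀ.mulVec (X.mulVec ((Xᵀ * X)⁻¹.mulVec (Xᵀ.mulVec b)))) := by
  have hdet : IsUnit (Xᵀ * X).det := (Matrix.isUnit_iff_isUnit_det _).mp hinv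
  have hinvmul : (Xᵀ * X)⁻¹ * (Xᵀ * X) = 1 := Matrix.nonsing_inv_mul _ hdet
  -- from active set equations
  have h1 : Xᵀ.mulVec (X.mulVec β - (q + τ • b)) = Xᵀ.mulVec (X.mulVec β' - (q + τ' • b)) := by
    have := hA.trans hA'.symm
    have := add_right_cancel this
    exact this
  have h2 : (Xᵀ * X).mulVec (β' - β) = (τ' - τ) • Xᵀ.mulVec b := by
    have := h1
    simp only [Matrix.mulVec_sub, Matrix.mulVec_add, Matrix.mulVec_smul,
      Matrix.mulVec_mulVec] at this ⊢
    rw [sub_smul]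
    abel_nf
    abel_nf at this
    linear_combination (norm := module) - this
  have h3 : β' - β = (τ' - τ) • (Xᵀ * X)⁻¹.mulVec (Xᵀ.mulVec b) := by
    have := congrArg ((Xᵀ * X)⁻¹.mulVec ·) h2
    simpa [Matrix.mulVec_mulVec, hinvmul, Matrix.mulVec_smul] using this
  have hsc : lam • sc = Xcᵀ.mulVec ((q + τ • b) - X.mulVec β) := by
    have := hC
    linear_combination (norm := module) this
  have hsc' : lam • sc' = Xcᵀ.mulVec ((q + τ' • b) - X.mulVec β') := by
    have := hC'
    linear_combination (norm := module) this
  rw [hsc, hsc']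
  have hβ' : β' = β + (τ' - τ) • (Xᵀ * X)⁻¹.mulVec (Xᵀ.mulVec b) := by
    rw [← h3]; abel
  rw [hβ']
  simp only [Matrix.mulVec_sub, Matrix.mulVec_add, Matrix.mulVec_smul, sub_smul, smul_sub]
  module
end

section
/- (Lemma 2) Let x_ℓ, x_{ℓ′} ∈ {0,1}ⁿ satisfy x_{iℓ′} ≤ x_{iℓ} for all i, let w, v ∈ ℝⁿ have all entries nonnegative, let Δ*_ℓ ≥ 0, and let ρ_k, η_k ∈ ℝ. Define ρ_j = x_jᵀ w and η_j = x_jᵀ v. If |ρ_ℓ| + Δ*_ℓ|η_ℓ| < |ρ_k| − Δ*_ℓ|η_k|, then |ρ_{ℓ′}| + Δ*_ℓ|η_{ℓ′}| < |ρ_k| − Δ*_ℓ|η_k|. Consequently, when the pruning condition holds at node ℓ it holds at every descendant ℓ′ ⊃ ℓ, so the entire sub-tree rooted at ℓ can be pruned. -/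
open Matrix

/-- Lemma 2: if the pruning condition holds at node ℓ (with nonnegative residual and
direction vectors), then it holds at every descendant ℓ′, so the sub-tree rooted at ℓ
can be pruned. -/
theorem pruning_descends_in_tree
    (n : ℕ) (xl xl' : Fin n → ℝ)
    (hbl : ∀ i, xl i = 0 ∨ xl i = 1) (hbl' : ∀ i, xl' i = 0 ∨ xl' i = 1)
    (hmono : ∀ i, xl' i ≤ xl i)
    (w v : Fin n → ℝ) (hw : ∀ i, 0 ≤ w i) (hv : ∀ i, 0 ≤ v i)
    (Δstar : ℝ) (hΔ : 0 ≤ Δstar) (ρk ηk : ℝ)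
    (h : |xl ⬝ᵥ w| + Δstar * |xl ⬝ᵥ v| < |ρk| - Δstar * |ηk|) :
    |xl' ⬝ᵥ w| + Δstar * |xl' ⬝ᵥ v| < |ρk| - Δstar * |ηk| := by
  have hxl : ∀ i, 0 ≤ xl i := fun i => by rcases hbl i with h | h <;> simp [h]
  have hxl' : ∀ i, 0 ≤ xl' i := fun i => by rcases hbl' i with h | h <;> simp [h]
  have key : ∀ u : Fin n → ℝ, (∀ i, 0 ≤ u i) → 0 ≤ xl' ⬝ᵥ u ∧ xl' ⬝ᵥ u ≤ xl ⬝ᵥ u := by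
    intro u hu
    constructor
    · exact Finset.sum_nonneg fun i _ => mul_nonneg (hxl' i) (hu i)
    · exact Finset.sum_le_sum fun i _ => mul_le_mul_of_nonneg_right (hmono i) (hu i)
  obtain ⟨hw0, hwle⟩ := key w hw
  obtain ⟨hv0, hvle⟩ := key v hv
  have h1 : |xl' ⬝ᵥ w| ≤ |xl ⬝ᵥ w| := by
    rw [abs_of_nonneg hw0, abs_of_nonneg (hw0.trans hwle)]; exact hwle
  have h2 : |xl' ⬝ᵥ v| ≤ |xl ⬝ᵥ v| := by
    rw [abs_of_nonneg hv0, abs_of_nonneg (hv0.trans hvle)]; exact hvle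
  calc |xl' ⬝ᵥ w| + Δstar * |xl' ⬝ᵥ v| ≤ |xl ⬝ᵥ w| + Δstar * |xl ⬝ᵥ v| := by
        gcongr
    _ < |ρk| - Δstar * |ηk| := h
end

section
/- (Lemma 3) Let x_ℓ, x_{ℓ′} ∈ {0,1}ⁿ satisfy x_{iℓ′} ≤ x_{iℓ} for all i, let w, v, b ∈ ℝⁿ, let x_k ∈ ℝⁿ, and let Δ*_ℓ ≥ 0. Define ρ_j = x_jᵀ w, η_j = x_jᵀ v, θ_j = x_jᵀ b, and for u ∈ {w, v, b} define b_{j,u} := max( Σ_{i : u_i > 0} |u_i| x_{ij}, Σ_{i : u_i < 0} |u_i| x_{ij} ). If b_{ℓ,w} + Δ*_ℓ b_{ℓ,b} + Δ*_ℓ b_{ℓ,v} < |ρ_k| − Δ*_ℓ|θ_k| − Δ*_ℓ|η_k|, then for every Δ with 0 ≤ Δ ≤ Δ*_ℓ, |ρ_{ℓ′} + Δ θ_{ℓ′} − Δ η_{ℓ′}| < |ρ_k + Δ θ_k − Δ η_k|; in particular the inclusion equation |ρ_{ℓ′} + Δ θ_{ℓ′} − Δ η_{ℓ′}| = |ρ_k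 + Δ θ_k − Δ η_k| has no solution Δ ∈ [0, Δ*_ℓ], so the step size at every descendant ℓ′ of ℓ exceeds Δ*_ℓ. -/
open Matrix

open Finset in
/-- The bound b_{j,u} = max(Σ_{u_i>0}|u_i|x_{ij}, Σ_{u_i<0}|u_i|x_{ij}). -/
noncomputable def bndStmt8 {n : ℕ} (x u : Fin n → ℝ) : ℝ :=
  max (∑ i ∈ univ.filter (fun i => 0 < u i), |u i| * x i)
      (∑ i ∈ univ.filter (fun i => u i < 0), |u i| * x i)

open Finset in
lemma key_bnd {n : ℕ} (x x' u : Fin n → ℝ) (hx0 : ∀ i, 0 ≤ x' i)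
    (hm : ∀ i, x' i ≤ x i) : |x' ⬝ᵥ u| ≤ bndStmt8 x u := by
  have hsplit : x' ⬝ᵥ u =
      (∑ i ∈ univ.filter (fun i => 0 < u i), x' i * u i)
      + (∑ i ∈ univ.filter (fun i => u i < 0), x' i * u i) := by
    rw [dotProduct, Finset.sum_filter, Finset.sum_filter, ← Finset.sum_add_distrib]
    apply Finset.sum_congr rfl
    intro i _
    rcases lt_trichotomy (u i) 0 with h' | h' | h' <;>
      first | simp [h', not_lt.mpr h'.le] | simp [h']
  have hpos : ∑ i ∈ univ.filter (fun i => 0 < u i), x' i * u i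
      ≤ ∑ i ∈ univ.filter (fun i => 0 < u i), |u i| * x i := by
    apply Finset.sum_le_sum
    intro i hi
    simp only [Finset.mem_filter] at hi
    rw [abs_of_pos hi.2, mul_comm]
    exact mul_le_mul_of_nonneg_left (hm i) hi.2.le
  have hposnn : 0 ≤ ∑ i ∈ univ.filter (fun i => 0 < u i), x' i * u i := by
    apply Finset.sum_nonneg
    intro i hi
    simp only [Finset.mem_filter] at hi
    exact mul_nonneg (hx0 i) hi.2.le
  have hneg : -∑ i ∈ univ.filter (fun i => u i < 0), x' i * u i
      ≤ ∑ i ∈ univ.filter (fun i => u i < 0), |u i| * x i := by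
    rw [← Finset.sum_neg_distrib]
    apply Finset.sum_le_sum
    intro i hi
    simp only [Finset.mem_filter] at hi
    rw [abs_of_neg hi.2]
    have : -(x' i * u i) = -u i * x' i := by ring
    rw [this]
    exact mul_le_mul_of_nonneg_left (hm i) (neg_nonneg.mpr hi.2.le)
  have hnegnp : ∑ i ∈ univ.filter (fun i => u i < 0), x' i * u i ≤ 0 := by
    apply Finset.sum_nonpos
    intro i hi
    simp only [Finset.mem_filter] at hi
    exact mul_nonpos_of_nonneg_of_nonpos (hx0 i) hi.2.le
  rw [abs_le]
  constructor
  · rw [hsplit]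
    have : -(∑ i ∈ univ.filter (fun i => u i < 0), |u i| * x i) ≤
        (∑ i ∈ univ.filter (fun i => 0 < u i), x' i * u i)
        + (∑ i ∈ univ.filter (fun i => u i < 0), x' i * u i) := by
      nlinarith [hneg, hposnn]
    refine le_trans ?_ this
    simp [bndStmt8]
  · rw [hsplit]
    have : (∑ i ∈ univ.filter (fun i => 0 < u i), x' i * u i)
        + (∑ i ∈ univ.filter (fun i => u i < 0), x' i * u i)
        ≤ ∑ i ∈ univ.filter (fun i => 0 < u i), |u i| * x i := by
      nlinarith [hpos, hnegnp]
    exact this.trans (le_max_left _ _)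

/-- Lemma 3: the general pruning condition for the τ-path ensures that no descendant ℓ′
of node ℓ can satisfy the inclusion equation at any step size Δ ∈ [0, Δ*_ℓ]. -/
theorem general_pruning_tau_path
    (n : ℕ) (xl xl' xk : Fin n → ℝ)
    (hbl : ∀ i, xl i = 0 ∨ xl i = 1) (hbl' : ∀ i, xl' i = 0 ∨ xl' i = 1)
    (hmono : ∀ i, xl' i ≤ xl i)
    (w v b : Fin n → ℝ) (Δstar : ℝ) (hΔ : 0 ≤ Δstar)
    (h : bndStmt8 xl w + Δstar * bndStmt8 xl b + Δstar * bndStmt8 xl v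
        < |xk ⬝ᵥ w| - Δstar * |xk ⬝ᵥ b| - Δstar * |xk ⬝ᵥ v|) :
    ∀ Δ : ℝ, 0 ≤ Δ → Δ ≤ Δstar →
      |xl' ⬝ᵥ w + Δ * (xl' ⬝ᵥ b) - Δ * (xl' ⬝ᵥ v)|
        < |xk ⬝ᵥ w + Δ * (xk ⬝ᵥ b) - Δ * (xk ⬝ᵥ v)| := by
  intro Δ hΔ0 hΔle
  have hx0 : ∀ i, 0 ≤ xl' i := fun i => by rcases hbl' i with h' | h' <;> simp [h']
  have bw := key_bnd xl xl' w hx0 hmono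
  have bb := key_bnd xl xl' b hx0 hmono
  have bv := key_bnd xl xl' v hx0 hmono
  have bnn : ∀ u : Fin n → ℝ, 0 ≤ bndStmt8 xl u := by
    intro u
    refine le_trans ?_ (le_max_left _ _)
    apply Finset.sum_nonneg
    intro i hi
    have : 0 ≤ xl i := by rcases hbl i with h' | h' <;> simp [h']
    exact mul_nonneg (abs_nonneg _) this
  have lhs_le : |xl' ⬝ᵥ w + Δ * (xl' ⬝ᵥ b) - Δ * (xl' ⬝ᵥ v)|
      ≤ bndStmt8 xl w + Δstar * bndStmt8 xl b + Δstar * bndStmt8 xl v := by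
    calc |xl' ⬝ᵥ w + Δ * (xl' ⬝ᵥ b) - Δ * (xl' ⬝ᵥ v)|
        ≤ |xl' ⬝ᵥ w| + |Δ * (xl' ⬝ᵥ b)| + |Δ * (xl' ⬝ᵥ v)| := by
          calc |xl' ⬝ᵥ w + Δ * (xl' ⬝ᵥ b) - Δ * (xl' ⬝ᵥ v)|
              ≤ |xl' ⬝ᵥ w + Δ * (xl' ⬝ᵥ b)| + |Δ * (xl' ⬝ᵥ v)| := abs_sub _ _
            _ ≤ |xl' ⬝ᵥ w| + |Δ * (xl' ⬝ᵥ b)| + |Δ * (xl' ⬝ᵥ v)| := by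
                gcongr; exact abs_add_le _ _
      _ = |xl' ⬝ᵥ w| + Δ * |xl' ⬝ᵥ b| + Δ * |xl' ⬝ᵥ v| := by
          rw [abs_mul, abs_mul, abs_of_nonneg hΔ0]
      _ ≤ bndStmt8 xl w + Δstar * bndStmt8 xl b + Δstar * bndStmt8 xl v := by
          nlinarith [bnn b, bnn v, abs_nonneg (xl' ⬝ᵥ b), abs_nonneg (xl' ⬝ᵥ v), bw, bb, bv]
  have rhs_ge : |xk ⬝ᵥ w| - Δstar * |xk ⬝ᵥ b| - Δstar * |xk ⬝ᵥ v|
      ≤ |xk ⬝ᵥ w + Δ * (xk ⬝ᵥ b) - Δ * (xk ⬝ᵥ v)| := by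
    have h1 : |xk ⬝ᵥ w| ≤ |xk ⬝ᵥ w + Δ * (xk ⬝ᵥ b) - Δ * (xk ⬝ᵥ v)|
        + Δ * |xk ⬝ᵥ b| + Δ * |xk ⬝ᵥ v| := by
      have e : xk ⬝ᵥ w = (xk ⬝ᵥ w + Δ * (xk ⬝ᵥ b) - Δ * (xk ⬝ᵥ v))
          + (Δ * (xk ⬝ᵥ v) - Δ * (xk ⬝ᵥ b)) := by ring
      calc |xk ⬝ᵥ w| = |(xk ⬝ᵥ w + Δ * (xk ⬝ᵥ b) - Δ * (xk ⬝ᵥ v))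
            + (Δ * (xk ⬝ᵥ v) - Δ * (xk ⬝ᵥ b))| := by rw [← e]
        _ ≤ |xk ⬝ᵥ w + Δ * (xk ⬝ᵥ b) - Δ * (xk ⬝ᵥ v)|
            + |Δ * (xk ⬝ᵥ v) - Δ * (xk ⬝ᵥ b)| := abs_add_le _ _
        _ ≤ |xk ⬝ᵥ w + Δ * (xk ⬝ᵥ b) - Δ * (xk ⬝ᵥ v)|
            + (|Δ * (xk ⬝ᵥ v)| + |Δ * (xk ⬝ᵥ b)|) := by gcongr; exact abs_sub _ _
        _ = _ := by rw [abs_mul, abs_mul, abs_of_nonneg hΔ0]; ring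
    have h2 : Δ * |xk ⬝ᵥ b| ≤ Δstar * |xk ⬝ᵥ b| := by gcongr
    have h3 : Δ * |xk ⬝ᵥ v| ≤ Δstar * |xk ⬝ᵥ v| := by gcongr
    linarith
  linarith
end

section
/- Let A be a finite index set with design matrix X_A ∈ ℝ^{n×|A|} such that X_Aᵀ X_A is invertible, y ∈ ℝⁿ, and s ∈ ℝ^{|A|}. Suppose β, β′ ∈ ℝ^{|A|} and λ_t, λ_{t+1} ∈ ℝ satisfy −X_Aᵀ(y − X_A β) + λ_t s = 0 and −X_Aᵀ(y − X_A β′) + λ_{t+1} s = 0 (same active set and same sign vector s at both regularization levels). Then β′ − β = −(X_Aᵀ X_A)⁻¹ s · (λ_{t+1} − λ_t); in particular the Lasso solution is piecewise linear in λ with direction ν_A(λ) = (X_Aᵀ X_A)⁻¹ s. -/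
open Matrix

/-- In the LASSO λ-path, if the KKT stationarity condition holds on the active set with
the same sign vector at two regularization levels, then the solution moves linearly in λ
with direction ν_A = (X_Aᵀ X_A)⁻¹ s. -/
theorem lasso_lambda_path_piecewise_linear
    (n a : ℕ) (X : Matrix (Fin n) (Fin a) ℝ) (hinv : IsUnit (Xᵀ * X))
    (y : Fin n → ℝ) (s : Fin a → ℝ)
    (β β' : Fin a → ℝ) (lamt lamt1 : ℝ)
    (h : -(Xᵀ.mulVec (y - X.mulVec β)) + lamt • s = 0)
    (h' : -(Xᵀ.mulVec (y - X.mulVec β')) + lamt1 • s = 0) :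
    β' - β = -((lamt1 - lamt) • ((Xᵀ * X)⁻¹.mulVec s)) := by
  have e1 := h
  have e2 := h'
  simp only [Matrix.mulVec_sub] at e1 e2
  have hb : Xᵀ.mulVec (X.mulVec β) = Xᵀ.mulVec y - lamt • s := by
    linear_combination (norm := module) e1
  have hb' : Xᵀ.mulVec (X.mulVec β') = Xᵀ.mulVec y - lamt1 • s := by
    linear_combination (norm := module) e2
  have key : (Xᵀ * X).mulVec (β' - β) = -((lamt1 - lamt) • s) := by
    rw [Matrix.mulVec_sub, ← Matrix.mulVec_mulVec, ← Matrix.mulVec_mulVec, hb, hb']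
    module
  calc β' - β = (Xᵀ * X)⁻¹.mulVec ((Xᵀ * X).mulVec (β' - β)) := by
        rw [Matrix.mulVec_mulVec, Matrix.nonsing_inv_mul _ ((Matrix.isUnit_iff_isUnit_det _).mp hinv),
          Matrix.one_mulVec]
    _ = -((lamt1 - lamt) • ((Xᵀ * X)⁻¹.mulVec s)) := by
        rw [key, Matrix.mulVec_neg, Matrix.mulVec_smul]
end

section
/- (λ-path pruning) Let x_ℓ, x_{ℓ′} ∈ {0,1}ⁿ satisfy x_{iℓ′} ≤ x_{iℓ} for all i, let w, v ∈ ℝⁿ, let x_k ∈ ℝⁿ, and let Δ* ≥ 0. Define ρ_j = x_jᵀ w, η_j = x_jᵀ v, and for u ∈ {w, v} define b_{j,u} := max( Σ_{i : u_i > 0} |u_i| x_{ij}, Σ_{i : u_i < 0} |u_i| x_{ij} ). If b_{ℓ,w} + Δ* b_{ℓ,v} < |ρ_k| − Δ*|η_k|, then for every Δ with 0 ≤ Δ ≤ Δ*, |x_{ℓ′}ᵀ w − Δ x_{ℓ′}ᵀ v| < |x_kᵀ w − Δ x_kᵀ v|; in particular no descendant ℓ′ of ℓ can satisfy the λ-path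 inclusion equation |x_{ℓ′}ᵀ(w − Δ v)| = |x_kᵀ(w − Δ v)| with step Δ ≤ Δ*. -/
open Matrix

open Finset in
/-- The bound b_{j,u} = max(Σ_{u_i>0}|u_i|x_{ij}, Σ_{u_i<0}|u_i|x_{ij}). -/
noncomputable def bndStmt12 {n : ℕ} (x u : Fin n → ℝ) : ℝ :=
  max (∑ i ∈ univ.filter (fun i => 0 < u i), |u i| * x i)
      (∑ i ∈ univ.filter (fun i => u i < 0), |u i| * x i)

open Finset in
lemma bndStmt12_nonneg {n : ℕ} {x : Fin n → ℝ} (hx : ∀ i, 0 ≤ x i) (u : Fin n → ℝ) :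
    0 ≤ bndStmt12 x u := by
  refine le_max_iff.mpr (Or.inl (Finset.sum_nonneg fun i _ => ?_))
  exact mul_nonneg (abs_nonneg _) (hx i)

open Finset in
lemma abs_dot_le_bnd {n : ℕ} {x x' : Fin n → ℝ}
    (hx : ∀ i, 0 ≤ x i) (hx'0 : ∀ i, 0 ≤ x' i) (hmono : ∀ i, x' i ≤ x i)
    (u : Fin n → ℝ) : |x' ⬝ᵥ u| ≤ bndStmt12 x u := by
  have hsplit : ∀ f : Fin n → ℝ, ∑ i, f i =
      (∑ i ∈ univ.filter (fun i => 0 < u i), f i) +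
      (∑ i ∈ univ.filter (fun i => ¬ 0 < u i), f i) :=
    fun f => (Finset.sum_filter_add_sum_filter_not univ _ f).symm
  rw [abs_le]
  constructor
  · -- lower bound: -b ≤ x'⬝u, i.e. -(x'⬝u) ≤ b via the u<0 part
    have : -(x' ⬝ᵥ u) ≤ ∑ i ∈ univ.filter (fun i => u i < 0), |u i| * x i := by
      rw [dotProduct, ← Finset.sum_neg_distrib]
      have hsplit2 : ∀ f : Fin n → ℝ, ∑ i, f i =
          (∑ i ∈ univ.filter (fun i => u i < 0), f i) +
          (∑ i ∈ univ.filter (fun i => ¬ u i < 0), f i) :=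
        fun f => (Finset.sum_filter_add_sum_filter_not univ _ f).symm
      rw [hsplit2]
      have h1 : ∑ i ∈ univ.filter (fun i => u i < 0), -(x' i * u i) ≤
          ∑ i ∈ univ.filter (fun i => u i < 0), |u i| * x i := by
        refine Finset.sum_le_sum fun i hi => ?_
        simp only [Finset.mem_filter] at hi
        rw [abs_of_neg hi.2]
        have := mul_le_mul_of_nonneg_left (hmono i) (neg_nonneg.mpr hi.2.le)
        nlinarith [hx'0 i, hi.2.le]
      have h2 : ∑ i ∈ univ.filter (fun i => ¬ u i < 0), -(x' i * u i) ≤ 0 := by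
        refine Finset.sum_nonpos fun i hi => ?_
        simp only [Finset.mem_filter, not_lt] at hi
        have := mul_nonneg (hx'0 i) hi.2
        linarith
      linarith
    refine neg_le.mp ?_
    exact this.trans (le_max_right _ _)
  · have : x' ⬝ᵥ u ≤ ∑ i ∈ univ.filter (fun i => 0 < u i), |u i| * x i := by
      rw [dotProduct, hsplit]
      have h1 : ∑ i ∈ univ.filter (fun i => 0 < u i), x' i * u i ≤
          ∑ i ∈ univ.filter (fun i => 0 < u i), |u i| * x i := by
        refine Finset.sum_le_sum fun i hi => ?_
        simp only [Finset.mem_filter] at hi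
        rw [abs_of_pos hi.2]
        nlinarith [hmono i, hi.2.le, hx'0 i]
      have h2 : ∑ i ∈ univ.filter (fun i => ¬ 0 < u i), x' i * u i ≤ 0 := by
        refine Finset.sum_nonpos fun i hi => ?_
        simp only [Finset.mem_filter, not_lt] at hi
        exact mul_nonpos_of_nonneg_of_nonpos (hx'0 i) hi.2
      linarith
    exact this.trans (le_max_left _ _)

/-- λ-path pruning: the pruning condition at node ℓ ensures that no descendant ℓ′ can
satisfy the λ-path inclusion equation with step Δ ∈ [0, Δ*]. -/
theorem general_pruning_lambda_path
    (n : ℕ) (xl xl' xk : Fin n → ℝ)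
    (hbl : ∀ i, xl i = 0 ∨ xl i = 1) (hbl' : ∀ i, xl' i = 0 ∨ xl' i = 1)
    (hmono : ∀ i, xl' i ≤ xl i)
    (w v : Fin n → ℝ) (Δstar : ℝ) (hΔ : 0 ≤ Δstar)
    (h : bndStmt12 xl w + Δstar * bndStmt12 xl v < |xk ⬝ᵥ w| - Δstar * |xk ⬝ᵥ v|) :
    ∀ Δ : ℝ, 0 ≤ Δ → Δ ≤ Δstar →
      |xl' ⬝ᵥ w - Δ * (xl' ⬝ᵥ v)| < |xk ⬝ᵥ w - Δ * (xk ⬝ᵥ v)| := by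
  intro Δ hΔ0 hΔle
  have hx : ∀ i, 0 ≤ xl i := fun i => by rcases hbl i with h|h <;> simp [h]
  have hx' : ∀ i, 0 ≤ xl' i := fun i => by rcases hbl' i with h|h <;> simp [h]
  have hw := abs_dot_le_bnd hx hx' hmono w
  have hv := abs_dot_le_bnd hx hx' hmono v
  have hvnn := bndStmt12_nonneg hx v
  have hub : |xl' ⬝ᵥ w - Δ * (xl' ⬝ᵥ v)| ≤ bndStmt12 xl w + Δstar * bndStmt12 xl v := by
    calc |xl' ⬝ᵥ w - Δ * (xl' ⬝ᵥ v)| ≤ |xl' ⬝ᵥ w| + |Δ * (xl' ⬝ᵥ v)| := abs_sub _ _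
      _ ≤ bndStmt12 xl w + Δstar * bndStmt12 xl v := by
          rw [abs_mul, abs_of_nonneg hΔ0]
          have : Δ * |xl' ⬝ᵥ v| ≤ Δstar * bndStmt12 xl v := by
            apply mul_le_mul hΔle hv (abs_nonneg _) hΔ
          linarith
  have hlb : |xk ⬝ᵥ w| - Δstar * |xk ⬝ᵥ v| ≤ |xk ⬝ᵥ w - Δ * (xk ⬝ᵥ v)| := by
    have h1 : |xk ⬝ᵥ w| - |Δ * (xk ⬝ᵥ v)| ≤ |xk ⬝ᵥ w - Δ * (xk ⬝ᵥ v)| :=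
      abs_sub_abs_le_abs_sub _ _
    rw [abs_mul, abs_of_nonneg hΔ0] at h1
    have : Δ * |xk ⬝ᵥ v| ≤ Δstar * |xk ⬝ᵥ v| :=
      mul_le_mul_of_nonneg_right hΔle (abs_nonneg _)
    linarith
  linarith
end

section
/- Let A be a finite index set with design matrix X_A ∈ ℝ^{n×|A|}, α > 0 (so that X_Aᵀ X_A + α I is invertible), y ∈ ℝⁿ, and s ∈ ℝ^{|A|}. Suppose β, β′ ∈ ℝ^{|A|} and λ_t, λ_{t+1} ∈ ℝ satisfy −X_Aᵀ(y − X_A β) + α β + λ_t s = 0 and −X_Aᵀ(y − X_A β′) + α β′ + λ_{t+1} s = 0 (same active set and same sign vector s). Then β′ − β = −(X_Aᵀ X_A + α I_{|A|})⁻¹ s · (λ_{t+1} − λ_t); in particular the elastic-net solution is piecewise linear in λ with direction ν_A(λ) = (X_Aᵀ X_A + α I_{|A|})⁻¹ s. -/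
/-!
Subtracting the two stationarity equations eliminates `y` and leaves
`(XᵀX + αI)(β' - β) + (λ' - λ) s = 0`. For `α > 0` the matrix `XᵀX + αI` is positive definite,
hence invertible, and solving for `β' - β` gives the claim.
-/

open Matrix

namespace Matrix

variable {m k R : Type*} [Fintype m] [Fintype k] [DecidableEq k]

theorem posDef_transpose_mul_self_add_smul_one (X : Matrix m k ℝ) {α : ℝ} (hα : 0 < α) :
    (Xᵀ * X + α • (1 : Matrix k k ℝ)).PosDef := by
  simpa using PosDef.posSemidef_add (posSemidef_conjTranspose_mul_self X) (PosDef.one.smul hα)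

theorem transpose_mul_self_add_smul_one_mulVec_sub_of_stationary [CommRing R]
    {X : Matrix m k R} {y : m → R} {α lam lam' : R} {s β β' : k → R}
    (h : -(Xᵀ *ᵥ (y - X *ᵥ β)) + α • β + lam • s = 0)
    (h' : -(Xᵀ *ᵥ (y - X *ᵥ β')) + α • β' + lam' • s = 0) :
    (Xᵀ * X + α • (1 : Matrix k k R)) *ᵥ (β' - β) = -((lam' - lam) • s) := by
  refine eq_neg_of_add_eq_zero_left ?_
  calc _ = (-(Xᵀ *ᵥ (y - X *ᵥ β')) + α • β' + lam' • s)
          - (-(Xᵀ *ᵥ (y - X *ᵥ β)) + α • β + lam • s) := by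
        simp only [add_mulVec, smul_mulVec, one_mulVec, mulVec_sub, ← mulVec_mulVec]
        module
    _ = 0 := by rw [h, h', sub_self]

end Matrix

/-- In the elastic-net λ-path, if the KKT stationarity condition holds on the active set
with the same sign vector at two regularization levels, the solution moves linearly in λ
with direction ν_A = (X_Aᵀ X_A + α I)⁻¹ s. -/
theorem elastic_net_lambda_path_piecewise_linear
    (n a : ℕ) (X : Matrix (Fin n) (Fin a) ℝ) (α : ℝ) (hα : 0 < α)
    (y : Fin n → ℝ) (s : Fin a → ℝ)
    (β β' : Fin a → ℝ) (lamt lamt1 : ℝ)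
    (h : -(Xᵀ.mulVec (y - X.mulVec β)) + α • β + lamt • s = 0)
    (h' : -(Xᵀ.mulVec (y - X.mulVec β')) + α • β' + lamt1 • s = 0) :
    β' - β =
      -((lamt1 - lamt) •
        ((Xᵀ * X + α • (1 : Matrix (Fin a) (Fin a) ℝ))⁻¹.mulVec s)) := by
  let := (posDef_transpose_mul_self_add_smul_one X hα).isUnit.invertible
  have hstep := transpose_mul_self_add_smul_one_mulVec_sub_of_stationary h h'
  rw [← mulVec_smul, ← mulVec_neg, inv_mulVec_eq_vec hstep.symm]
end
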